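/- Let A be a unital C*-algebra, n ≥ 3 and k ≥ 1 integers, and p a family as in the context (a representation of Mor⁺(K_nᵏ, K_n)). Let T ⊆ S ⊆ Fin k. Let (𝐱, 𝐲), (𝐮, 𝐯), (𝐰, 𝐳) be pairs of tuples in Fin k → Fin n whose agreement sets {i : first(i) = second(i)} are exactly S, T, and S ∖ T respectively. Then Σ_{a ∈ Fin n} p(𝐱, a) p(𝐲, a) = Σ_{a ∈ Fin n} p(𝐮, a) p(𝐯, a) + Σ_{a ∈ Fin n} p(𝐰, a) p(𝐳, a); i.e., Π_S = Π_T + Π_{S∖T}. -/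

import Mathlib

/-!
Write `Π(x, y) = ∑ₐ p(x, a) p(y, a)`. If `c₁, …, cₙ` differ pairwise in every coordinate, the
projections `p(cⱼ, a)` are pairwise orthogonal, so `∑ⱼ p(cⱼ, a)` is a projection for each `a`;
the complementary projections sum to `n - n = 0`, hence `∑ⱼ p(cⱼ, a) = 1` and
`∑ⱼ Π(cⱼ, y) = 1`. Extending a few pairwise far tuples covering `y` to such a clique, the extra
members are far from `y` and contribute nothing; in particular `Π(α, y) + Π(ω, y) = 1` when the
agreement sets of `α` and `ω` with `y` are complementary. Together with `Π(x, y)⋆ = Π(y, x)` this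
shows that `Π(x, y)` depends only on the agreement set, and that the `Π` of the blocks of any
partition into at most `n` blocks sum to `1`. The theorem compares the partitions `{S, Sᶜ}` and
`{T, S \ T, Sᶜ}`.
-/

open Finset

theorem isStarProjection_sum {R ι : Type*} [NonUnitalNonAssocSemiring R] [StarRing R]
    {s : Finset ι} {e : ι → R} (he : ∀ i ∈ s, IsStarProjection (e i))
    (horth : (s : Set ι).Pairwise fun i j => e i * e j = 0) :
    IsStarProjection (∑ i ∈ s, e i) := by
  classical
  induction s using Finset.induction_on with
  | empty => exact sum_empty (f := e) ▸ IsStarProjection.zero R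
  | insert a s ha ih =>
    rw [sum_insert ha]
    refine (he a (mem_insert_self a s)).add
      (ih (fun i hi => he i (mem_insert_of_mem hi)) (horth.mono (by simp))) ?_
    rw [mul_sum]
    exact sum_eq_zero fun j hj => horth (by simp) (by simp [hj])
      (ne_of_mem_of_not_mem hj ha).symm

theorem Fin.exists_eq_iff_mem_and_eq_iff_mem {n k : ℕ} (hn : 2 < n) (S : Set (Fin k))
    {β δ : Fin k → Fin n} (hβδ : Set.EqOn β δ S) :
    ∃ α : Fin k → Fin n, (∀ i, α i = β i ↔ i ∈ S) ∧ ∀ i, α i = δ i ↔ i ∈ S := by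
  classical
  choose ζ hζ using fun i => Fin.exists_ne_and_ne_of_two_lt (β i) (δ i) hn
  refine ⟨fun i => if i ∈ S then β i else ζ i, fun i => ?_, fun i => ?_⟩ <;>
    by_cases hi : i ∈ S <;> simp [hi, hζ, hβδ _]

section QuantumHom

variable {A : Type*} [Ring A] [StarRing A] {n k : ℕ}

structure IsQuantumHom (p : (Fin k → Fin n) → Fin n → A) : Prop where
  isStarProjection : ∀ x a, IsStarProjection (p x a)
  sum_eq_one : ∀ x, ∑ a, p x a = 1
  mul_eq_zero_of_far : ∀ x y a, (∀ i, x i ≠ y i) → p x a * p y a = 0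

/-- `overlap p x y` is the paper's `Π_S` for `S` the agreement set of `x` and `y` (well defined
by `overlap_congr`). -/
def overlap (p : (Fin k → Fin n) → Fin n → A) (x y : Fin k → Fin n) : A :=
  ∑ a, p x a * p y a

variable {p : (Fin k → Fin n) → Fin n → A}

namespace IsQuantumHom

variable (hp : IsQuantumHom p)
include hp

theorem star_overlap (x y : Fin k → Fin n) : star (overlap p x y) = overlap p y x := by
  simp only [overlap, star_sum, star_mul, (hp.isStarProjection _ _).isSelfAdjoint.star_eq]

theorem overlap_eq_zero_of_far {x y : Fin k → Fin n} (hxy : ∀ i, x i ≠ y i) :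
    overlap p x y = 0 :=
  sum_eq_zero fun a _ => hp.mul_eq_zero_of_far x y a hxy

section StarOrdered

variable [PartialOrder A] [StarOrderedRing A]

theorem sum_clique_eq_one (c : Fin n → Fin k → Fin n)
    (hc : Pairwise fun j j' => ∀ i, c j i ≠ c j' i) (a : Fin n) :
    ∑ j, p (c j) a = 1 := by
  have hproj (b : Fin n) : IsStarProjection (∑ j, p (c j) b) :=
    isStarProjection_sum (fun j _ => hp.isStarProjection _ _)
      fun j _ j' _ hjj' => hp.mul_eq_zero_of_far _ _ _ (hc hjj')
  have htotal : ∑ b, (1 - ∑ j, p (c j) b) = 0 := by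
    rw [sum_sub_distrib, sum_comm]
    simp [hp.sum_eq_one]
  have := (sum_eq_zero_iff_of_nonneg fun b _ => (hproj b).one_sub_nonneg).mp htotal a
    (mem_univ a)
  exact (sub_eq_zero.mp this).symm

theorem sum_overlap_clique (c : Fin n → Fin k → Fin n)
    (hc : Pairwise fun j j' => ∀ i, c j i ≠ c j' i) (y : Fin k → Fin n) :
    ∑ j, overlap p (c j) y = 1 := by
  simp only [overlap]
  rw [sum_comm]
  simp [← sum_mul, hp.sum_clique_eq_one c hc, hp.sum_eq_one]

theorem sum_overlap_of_covers {m : ℕ} (hmn : m ≤ n) (v : Fin m → Fin k → Fin n)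
    (hv : Pairwise fun j j' => ∀ i, v j i ≠ v j' i) (y : Fin k → Fin n)
    (hy : ∀ i, ∃ j, v j i = y i) :
    ∑ j, overlap p (v j) y = 1 := by
  choose σ hσ using fun i => Equiv.Perm.exists_extending_pair (Fin.castLE hmn) (v · i)
    (Fin.castLE_injective hmn) fun j j' h => by_contra fun hjj' => hv hjj' i h
  rw [← hp.sum_overlap_clique (fun j i => σ i j) (fun j j' hjj' i => (σ i).injective.ne hjj') y]
  refine Fintype.sum_of_injective (Fin.castLE hmn) (Fin.castLE_injective hmn) _ _
    (fun j' hj' => hp.overlap_eq_zero_of_far fun i => ?_) fun j => by simp only [hσ]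
  obtain ⟨j, hj⟩ := hy i
  rw [← hj, ← hσ]
  exact (σ i).injective.ne fun h => hj' ⟨j, h.symm⟩

theorem overlap_add_overlap_compl (hn : 2 ≤ n) {S : Set (Fin k)} {α ω β : Fin k → Fin n}
    (hα : ∀ i, α i = β i ↔ i ∈ S) (hω : ∀ i, ω i = β i ↔ i ∉ S) :
    overlap p α β + overlap p ω β = 1 := by
  have hfar (i : Fin k) : α i ≠ ω i := fun h => by
    have := hα i
    rw [h, hω i] at this
    tauto
  have hcover (i : Fin k) : ∃ j, ![α, ω] j i = β i := by
    by_cases hi : i ∈ S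
    · exact ⟨0, (hα i).2 hi⟩
    · exact ⟨1, (hω i).2 hi⟩
  have := hp.sum_overlap_of_covers hn ![α, ω] ?_ β hcover
  · simpa using this
  · intro j j' hjj' i
    fin_cases j <;> fin_cases j' <;> simp_all [Ne.symm]

variable (hn : 2 < n)
include hn

theorem overlap_congr_left {S : Set (Fin k)} {α γ β : Fin k → Fin n}
    (hα : ∀ i, α i = β i ↔ i ∈ S) (hγ : ∀ i, γ i = β i ↔ i ∈ S) :
    overlap p α β = overlap p γ β := by
  obtain ⟨ω, hω, -⟩ := Fin.exists_eq_iff_mem_and_eq_iff_mem hn Sᶜ (Set.eqOn_refl β _)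
  exact add_right_cancel <| (hp.overlap_add_overlap_compl hn.le hα hω).trans
    (hp.overlap_add_overlap_compl hn.le hγ hω).symm

theorem overlap_congr_right {S : Set (Fin k)} {α β δ : Fin k → Fin n}
    (hβ : ∀ i, α i = β i ↔ i ∈ S) (hδ : ∀ i, α i = δ i ↔ i ∈ S) :
    overlap p α β = overlap p α δ := by
  rw [← hp.star_overlap β, ← hp.star_overlap δ,
    hp.overlap_congr_left hn (fun i => eq_comm.trans (hβ i)) fun i => eq_comm.trans (hδ i)]

theorem overlap_congr {S : Set (Fin k)} {α β γ δ : Fin k → Fin n}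
    (hαβ : ∀ i, α i = β i ↔ i ∈ S) (hγδ : ∀ i, γ i = δ i ↔ i ∈ S) :
    overlap p α β = overlap p γ δ := by
  classical
  -- `μ` agrees with `β` off `S` and with `δ` on `S`: pass from `β` to `μ` through the
  -- complementary pattern, then from `μ` to `δ` directly.
  let μ : Fin k → Fin n := fun i => if i ∈ S then δ i else β i
  obtain ⟨ω, hωβ, hωμ⟩ := Fin.exists_eq_iff_mem_and_eq_iff_mem hn Sᶜ (β := β) (δ := μ)
    fun i hi => by simp [μ, Set.notMem_of_mem_compl hi]
  obtain ⟨α', hα'μ, hα'δ⟩ := Fin.exists_eq_iff_mem_and_eq_iff_mem hn S (β := μ) (δ := δ)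
    fun i hi => by simp [μ, hi]
  have hαβ' := hp.overlap_add_overlap_compl hn.le hαβ hωβ
  have hα'μ' := hp.overlap_add_overlap_compl hn.le hα'μ hωμ
  calc overlap p α β = overlap p α' μ := by
        rw [hp.overlap_congr_right hn hωβ hωμ] at hαβ'
        exact add_right_cancel (hαβ'.trans hα'μ'.symm)
    _ = overlap p α' δ := hp.overlap_congr_right hn hα'μ hα'δ
    _ = overlap p γ δ := hp.overlap_congr_left hn hα'δ hγδ

theorem sum_overlap_of_partition {m : ℕ} (hmn : m ≤ n) (f : Fin k → Fin m)
    (α β : Fin m → Fin k → Fin n) (hαβ : ∀ j i, α j i = β j i ↔ f i = j) :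
    ∑ j, overlap p (α j) (β j) = 1 := by
  have hconst (j : Fin m) (i : Fin k) : Fin.castLE hmn j = Fin.castLE hmn (f i) ↔ f i = j :=
    (Fin.castLE_injective hmn).eq_iff.trans eq_comm
  rw [← hp.sum_overlap_of_covers hmn (fun j _ => Fin.castLE hmn j)
    (fun j j' hjj' _ => (Fin.castLE_injective hmn).ne hjj') (Fin.castLE hmn ∘ f)
    fun i => ⟨f i, rfl⟩]
  exact sum_congr rfl fun j _ => hp.overlap_congr hn (S := {i | f i = j}) (hαβ j) (hconst j)

end StarOrdered

end IsQuantumHom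

end QuantumHom

theorem stmt6_general {A : Type*} [CStarAlgebra A]
    (n k : ℕ) (hn : 3 ≤ n)
    (p : (Fin k → Fin n) → Fin n → A)
    (hidem : ∀ x a, p x a * p x a = p x a)
    (hsa : ∀ x a, star (p x a) = p x a)
    (hsum : ∀ x, ∑ a, p x a = 1)
    (horth : ∀ x y a, (∀ i, x i ≠ y i) → p x a * p y a = 0)
    (S T : Finset (Fin k)) (hTS : T ⊆ S)
    (x y u v w z : Fin k → Fin n)
    (hxy : ∀ i, x i = y i ↔ i ∈ S)
    (huv : ∀ i, u i = v i ↔ i ∈ T)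
    (hwz : ∀ i, w i = z i ↔ i ∈ S \ T) :
    ∑ a, p x a * p y a = (∑ a, p u a * p v a) + ∑ a, p w a * p z a := by
  let _ : PartialOrder A := CStarAlgebra.spectralOrder A
  have _ : StarOrderedRing A := CStarAlgebra.spectralOrderedRing A
  have hp : IsQuantumHom p := ⟨fun x a => ⟨hidem x a, hsa x a⟩, hsum, horth⟩
  obtain ⟨ω, hω, -⟩ := Fin.exists_eq_iff_mem_and_eq_iff_mem hn (↑S)ᶜ (Set.eqOn_refl y _)
  have hS : overlap p x y + overlap p ω y = 1 := hp.overlap_add_overlap_compl (by omega) hxy hω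
  have hT : overlap p u v + overlap p w z + overlap p ω y = 1 := by
    classical
    let block (i : Fin k) : Fin 3 := if i ∈ T then 0 else if i ∈ S then 1 else 2
    have := hp.sum_overlap_of_partition hn hn block ![u, w, ω] ![v, z, y] fun j i => by
      by_cases hiT : i ∈ T
      · fin_cases j <;> simp [block, hiT, hTS hiT, huv i, hwz i, hω i]
      · by_cases hiS : i ∈ S <;> fin_cases j <;> simp [block, hiT, hiS, huv i, hwz i, hω i]
    simpa [Fin.sum_univ_three] using this
  exact add_right_cancel (hS.trans hT.symm)

/-- **Lemma (cool-projections (v)).** Let `A` be a unital C*-algebra, `n ≥ 3`, `k ≥ 1`,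
and `p` a representation of `Mor⁺(K_nᵏ, K_n)`. Let `T ⊆ S ⊆ Fin k`, and let `(x,y)`,
`(u,v)`, `(w,z)` be pairs with agreement sets exactly `S`, `T`, `S \ T` respectively.
Then `Π_S = Π_T + Π_{S\T}`. -/
theorem stmt6 {A : Type*} [CStarAlgebra A]
    (n k : ℕ) (hn : 3 ≤ n) (hk : 1 ≤ k)
    (p : (Fin k → Fin n) → Fin n → A)
    (hidem : ∀ x a, p x a * p x a = p x a)
    (hsa : ∀ x a, star (p x a) = p x a)
    (hsum : ∀ x, ∑ a, p x a = 1)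
    (horth : ∀ x y a, (∀ i, x i ≠ y i) → p x a * p y a = 0)
    (S T : Finset (Fin k)) (hTS : T ⊆ S)
    (x y u v w z : Fin k → Fin n)
    (hxy : ∀ i, x i = y i ↔ i ∈ S)
    (huv : ∀ i, u i = v i ↔ i ∈ T)
    (hwz : ∀ i, w i = z i ↔ i ∈ S \ T) :
    ∑ a, p x a * p y a = (∑ a, p u a * p v a) + ∑ a, p w a * p z a :=
  stmt6_general n k hn p hidem hsa hsum horth S T hTS x y u v w z hxy huv hwz
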